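/- Let F : ℝ × ℝ^{m×n} → ℝ^{m×n} satisfy ⟨Y, F(t, Y)⟩_F = 0 for all Y ∈ ℝ^{m×n} and all t. Let Û ∈ ℝ^{m×k} and V̂ ∈ ℝ^{n×k} have orthonormal columns, and let S : ℝ → ℝ^{k×k} be differentiable on [t0, t1] with S'(t) = Ûᵀ F(t, Û S(t) V̂ᵀ) V̂ for t ∈ [t0, t1]. Suppose Y0 = Û S(t0) V̂ᵀ, and let Y1 ∈ ℝ^{m×n} satisfy ‖Y1 − Û S(t1) V̂ᵀ‖_F ≤ ϑ. Then | ‖Y1‖_F − ‖Y0‖_F | ≤ ϑ. -/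

import Mathlib

/-!
Because `Û` and `V̂` have orthonormal columns, `‖Û S V̂ᵀ‖_F = ‖S‖_F`, and along the Galerkin
flow `d/dt ‖S‖_F² = 2 ⟨S, Ûᵀ F V̂⟩_F = 2 ⟨Û S V̂ᵀ, F(t, Û S V̂ᵀ)⟩_F = 0`. So the S-step keeps the
norm exactly, and the truncation moves it by at most `ϑ` by the reverse triangle inequality.
-/

open Matrix

/-- The Frobenius inner product `⟨A, B⟩_F = trace(Aᵀ B)`. -/
noncomputable def frobInner {m n : ℕ} (A B : Matrix (Fin m) (Fin n) ℝ) : ℝ :=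
  (Aᵀ * B).trace

/-- The Frobenius norm `‖A‖_F = ⟨A, A⟩_F^{1/2}`. -/
noncomputable def frobNorm {m n : ℕ} (A : Matrix (Fin m) (Fin n) ℝ) : ℝ :=
  Real.sqrt (frobInner A A)

section Frobenius

variable {m n k l : ℕ}

lemma frobInner_eq_sum (A B : Matrix (Fin m) (Fin n) ℝ) :
    frobInner A B = ∑ i, ∑ j, A i j * B i j := by
  simp only [frobInner, trace, diag_apply, mul_apply, transpose_apply]
  exact Finset.sum_comm

lemma frobInner_mul_mul_transpose (U : Matrix (Fin m) (Fin k) ℝ) (V : Matrix (Fin n) (Fin l) ℝ)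
    (A : Matrix (Fin k) (Fin l) ℝ) (B : Matrix (Fin m) (Fin n) ℝ) :
    frobInner (U * A * Vᵀ) B = frobInner A (Uᵀ * B * V) := by
  simp only [frobInner, transpose_mul, transpose_transpose, Matrix.mul_assoc]
  rw [trace_mul_comm V]
  simp only [Matrix.mul_assoc]

lemma frobNorm_mul_mul_transpose {U : Matrix (Fin m) (Fin k) ℝ} {V : Matrix (Fin n) (Fin l) ℝ}
    (hU : Uᵀ * U = 1) (hV : Vᵀ * V = 1) (A : Matrix (Fin k) (Fin l) ℝ) :
    frobNorm (U * A * Vᵀ) = frobNorm A := by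
  have hA : Uᵀ * (U * A * Vᵀ) * V = A := by
    simp only [Matrix.mul_assoc, ← Matrix.mul_assoc Uᵀ, hU, hV,
      Matrix.one_mul, Matrix.mul_one]
  rw [frobNorm, frobNorm, frobInner_mul_mul_transpose, hA]

section FrobeniusNorm

attribute [local instance] Matrix.frobeniusNormedAddCommGroup

lemma frobNorm_eq_norm (A : Matrix (Fin m) (Fin n) ℝ) : frobNorm A = ‖A‖ := by
  simp [frobNorm, frobenius_norm_def, frobInner_eq_sum, Real.sqrt_eq_rpow, ← sq]

lemma abs_frobNorm_sub_frobNorm_le (A B : Matrix (Fin m) (Fin n) ℝ) :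
    |frobNorm A - frobNorm B| ≤ frobNorm (A - B) := by
  simpa only [frobNorm_eq_norm] using abs_norm_sub_norm_le A B

end FrobeniusNorm

lemma hasDerivAt_frobInner_self {S D : ℝ → Matrix (Fin m) (Fin n) ℝ} {t : ℝ}
    (hS : ∀ i j, HasDerivAt (fun s => S s i j) (D t i j) t) :
    HasDerivAt (fun s => frobInner (S s) (S s)) (2 * frobInner (S t) (D t)) t := by
  simp only [frobInner_eq_sum, Finset.mul_sum]
  refine HasDerivAt.fun_sum fun i _ => HasDerivAt.fun_sum fun j _ => ?_
  exact ((hS i j).mul (hS i j)).congr_deriv (by ring)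

lemma frobNorm_eq_of_hasDerivAt_of_frobInner_eq_zero {S D : ℝ → Matrix (Fin m) (Fin n) ℝ}
    {a b : ℝ} (hab : a ≤ b)
    (hS : ∀ t ∈ Set.Icc a b, ∀ i j, HasDerivAt (fun s => S s i j) (D t i j) t)
    (hD : ∀ t ∈ Set.Icc a b, frobInner (S t) (D t) = 0) :
    frobNorm (S b) = frobNorm (S a) := by
  have hderiv : ∀ t ∈ Set.Icc a b, HasDerivAt (fun s => frobInner (S s) (S s)) 0 t :=
    fun t ht => by simpa [hD t ht] using hasDerivAt_frobInner_self (hS t ht)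
  have hconst := constant_of_has_deriv_right_zero
    (fun t ht => (hderiv t ht).continuousAt.continuousWithinAt)
    (fun t ht => (hderiv t (Set.Ico_subset_Icc_self ht)).hasDerivWithinAt)
    b (Set.right_mem_Icc.2 hab)
  rw [frobNorm, frobNorm, hconst]

end Frobenius

/-- Theorem 4 (norm preservation): one step of the rank-adaptive integrator (Galerkin S-step
followed by rank truncation with tolerance `ϑ`) preserves the Frobenius norm up to `ϑ`
when the differential equation does. -/
theorem rank_adaptive_norm_preservation
    {m n k : ℕ} {t0 t1 ϑ : ℝ}
    (F : ℝ → Matrix (Fin m) (Fin n) ℝ → Matrix (Fin m) (Fin n) ℝ)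
    (hF : ∀ t Y, frobInner Y (F t Y) = 0)
    (Uhat : Matrix (Fin m) (Fin k) ℝ) (Vhat : Matrix (Fin n) (Fin k) ℝ)
    (hU : Uhatᵀ * Uhat = 1) (hV : Vhatᵀ * Vhat = 1)
    (S : ℝ → Matrix (Fin k) (Fin k) ℝ)
    (ht : t0 ≤ t1)
    (hS : ∀ t ∈ Set.Icc t0 t1, ∀ i j,
      HasDerivAt (fun s => S s i j) ((Uhatᵀ * F t (Uhat * S t * Vhatᵀ) * Vhat) i j) t)
    (Y0 Y1 : Matrix (Fin m) (Fin n) ℝ)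
    (hY0 : Y0 = Uhat * S t0 * Vhatᵀ)
    (hY1 : frobNorm (Y1 - Uhat * S t1 * Vhatᵀ) ≤ ϑ) :
    |frobNorm Y1 - frobNorm Y0| ≤ ϑ := by
  have hnorm : frobNorm (Uhat * S t1 * Vhatᵀ) = frobNorm Y0 := by
    rw [hY0, frobNorm_mul_mul_transpose hU hV, frobNorm_mul_mul_transpose hU hV]
    exact frobNorm_eq_of_hasDerivAt_of_frobInner_eq_zero ht hS
      fun t _ => by rw [← frobInner_mul_mul_transpose, hF]
  calc |frobNorm Y1 - frobNorm Y0|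
      = |frobNorm Y1 - frobNorm (Uhat * S t1 * Vhatᵀ)| := by rw [hnorm]
    _ ≤ frobNorm (Y1 - Uhat * S t1 * Vhatᵀ) := abs_frobNorm_sub_frobNorm_le _ _
    _ ≤ ϑ := hY1
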